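/- arXiv:1809.03938 — 4 statements merged into one kernel-verified Lean document; each statement's English description precedes it below -/
import Mathlib

section
/- The set {a^i, da^i, ba^i, ca^i : 0 ≤ i ≤ 5} is a k-linear basis of H; in particular H has dimension 24 over k. -/
/- STATEMENT 1: {a^i, d a^i, b a^i, c a^i : 0 ≤ i ≤ 5} is a k-linear basis of H;
in particular H is 24-dimensional over k. -/

open scoped TensorProduct
namespace Paper24

variable (k : Type) [Field k] (ξ : k)

/-- The generator `a` of the free algebra on four generators. -/
noncomputable def a₀ : FreeAlgebra k (Fin 4) := FreeAlgebra.ι k 0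
/-- The generator `b`. -/
noncomputable def b₀ : FreeAlgebra k (Fin 4) := FreeAlgebra.ι k 1
/-- The generator `c`. -/
noncomputable def c₀ : FreeAlgebra k (Fin 4) := FreeAlgebra.ι k 2
/-- The generator `d`. -/
noncomputable def d₀ : FreeAlgebra k (Fin 4) := FreeAlgebra.ι k 3

/-- The defining relations of the Hopf algebra `H`; quotienting the free algebra by the
relation `r ~ r'` for each constructor is the same as quotienting by the two-sided ideal
generated by the corresponding differences. -/
inductive HRel : FreeAlgebra k (Fin 4) → FreeAlgebra k (Fin 4) → Prop
  | a6 : HRel (a₀ k ^ 6) 1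
  | b2 : HRel (b₀ k ^ 2) 0
  | c2 : HRel (c₀ k ^ 2) 0
  | d6 : HRel (d₀ k ^ 6) 1
  | a2d2 : HRel (a₀ k ^ 2) (d₀ k ^ 2)
  | ad : HRel (a₀ k * d₀ k) (d₀ k * a₀ k)
  | bc : HRel (b₀ k * c₀ k) 0
  | cb : HRel (c₀ k * b₀ k) 0
  | ab : HRel (a₀ k * b₀ k) (ξ • (b₀ k * a₀ k))
  | ac : HRel (a₀ k * c₀ k) (ξ • (c₀ k * a₀ k))
  | db : HRel (d₀ k * b₀ k) (-(ξ • (b₀ k * d₀ k)))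
  | dc : HRel (d₀ k * c₀ k) (-(ξ • (c₀ k * d₀ k)))
  | bd : HRel (b₀ k * d₀ k) (c₀ k * a₀ k)
  | ba : HRel (b₀ k * a₀ k) (c₀ k * d₀ k)

/-- The algebra `H`, as a quotient of the free algebra by the defining relations. -/
noncomputable abbrev HAlg := RingQuot (HRel k ξ)

/-- The image of `a` in `H`. -/
noncomputable def Ha : HAlg k ξ := RingQuot.mkAlgHom k (HRel k ξ) (a₀ k)
/-- The image of `b` in `H`. -/
noncomputable def Hb : HAlg k ξ := RingQuot.mkAlgHom k (HRel k ξ) (b₀ k)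
/-- The image of `c` in `H`. -/
noncomputable def Hc : HAlg k ξ := RingQuot.mkAlgHom k (HRel k ξ) (c₀ k)
/-- The image of `d` in `H`. -/
noncomputable def Hd : HAlg k ξ := RingQuot.mkAlgHom k (HRel k ξ) (d₀ k)

end Paper24

open Paper24

/-- The 24 putative basis elements of `H`: `(0,i) ↦ a^i`, `(1,i) ↦ d a^i`, `(2,i) ↦ b a^i`,
`(3,i) ↦ c a^i`. -/
noncomputable def HBasisElem (k : Type) [Field k] (ξ : k) (p : Fin 4 × Fin 6) : HAlg k ξ :=
  (match p.1 with
    | 0 => 1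
    | 1 => Hd k ξ
    | 2 => Hb k ξ
    | 3 => Hc k ξ) * Ha k ξ ^ (p.2 : ℕ)

/-! The 24 elements span `H`: their span contains `1` and is stable under right multiplication
by every generator `g`, because `a ^ n * g = c • (g * a ^ n)` for a scalar `c`, and by the
relations each product of one of `1, d, b, c` with a generator is a scalar multiple of some
`t * a ^ m` with `t ∈ {1, d, b, c}`.

They are linearly independent because `a ↦ [[ξx, 0], [0, x]]`, `b ↦ [[0, 1], [0, 0]]`,
`c ↦ [[0, y], [0, 0]]`, `d ↦ [[-ξxy, 0], [0, xy]]` respects the relations whenever `ξ ^ 6 = 1`,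
`x ^ 6 = 1` and `y ^ 2 = 1`. Over the group algebra `k[ℤ/6 × ℤ/2]`, with `x` and `y` the two
generators, the last columns of the images of `a^i, d a^i, b a^i, c a^i` are `(0, x^i)`,
`(0, x y x^i)`, `(x^i, 0)`, `(y x^i, 0)`: 24 distinct group elements placed in two entries. -/

theorem pow_mul_eq_smul_mul_pow {k A : Type*} [CommSemiring k] [Semiring A] [Algebra k A]
    {a b : A} {c : k} (h : a * b = c • (b * a)) (n : ℕ) : a ^ n * b = c ^ n • (b * a ^ n) := by
  induction n with
  | zero => simp
  | succ n ih =>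
    rw [pow_succ, mul_assoc, h, mul_smul_comm, ← mul_assoc, ih, smul_mul_assoc, smul_smul,
      pow_succ', mul_assoc]

section UpperTriangular

variable {R : Type*}

def upperTri [Zero R] (α β γ : R) : Matrix (Fin 2) (Fin 2) R := !![α, β; 0, γ]

variable [Semiring R]

theorem upperTri_mul (α β γ α' β' γ' : R) :
    upperTri α β γ * upperTri α' β' γ' = upperTri (α * α') (α * β' + β * γ') (γ * γ') := by
  simp [upperTri]

theorem upperTri_smul {S : Type*} [CommSemiring S] [Algebra S R] (c : S) (α β γ : R) :
    c • upperTri α β γ =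
      upperTri (algebraMap S R c * α) (algebraMap S R c * β) (algebraMap S R c * γ) := by
  ext i j; fin_cases i <;> fin_cases j <;> simp [upperTri, Algebra.smul_def]

theorem neg_upperTri {R : Type*} [Ring R] (α β γ : R) :
    -upperTri α β γ = upperTri (-α) (-β) (-γ) := by
  ext i j; fin_cases i <;> fin_cases j <;> simp [upperTri]

theorem one_eq_upperTri : (1 : Matrix (Fin 2) (Fin 2) R) = upperTri 1 0 1 := by
  ext i j; fin_cases i <;> fin_cases j <;> rfl

theorem zero_eq_upperTri : (0 : Matrix (Fin 2) (Fin 2) R) = upperTri 0 0 0 := by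
  ext i j; fin_cases i <;> fin_cases j <;> rfl

theorem upperTri_pow (α γ : R) (n : ℕ) : upperTri α 0 γ ^ n = upperTri (α ^ n) 0 (γ ^ n) := by
  induction n with
  | zero => simp [one_eq_upperTri]
  | succ n ih => simp [pow_succ, ih, upperTri_mul]

theorem upperTri_inj {α β γ α' β' γ' : R} :
    upperTri α β γ = upperTri α' β' γ' ↔ α = α' ∧ β = β' ∧ γ = γ' := by
  simp [upperTri, and_assoc]

end UpperTriangular

namespace Paper24

variable {k : Type} [Field k] {ξ : k}

section Relations

theorem Ha_pow_six : Ha k ξ ^ 6 = 1 := by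
  simpa [Ha] using RingQuot.mkAlgHom_rel k (HRel.a6 (ξ := ξ))

theorem Hb_mul_Hb : Hb k ξ * Hb k ξ = 0 := by
  simpa [Hb, sq] using RingQuot.mkAlgHom_rel k (HRel.b2 (ξ := ξ))

theorem Hc_mul_Hc : Hc k ξ * Hc k ξ = 0 := by
  simpa [Hc, sq] using RingQuot.mkAlgHom_rel k (HRel.c2 (ξ := ξ))

theorem Ha_mul_Ha : Ha k ξ * Ha k ξ = Hd k ξ * Hd k ξ := by
  simpa [Ha, Hd, sq] using RingQuot.mkAlgHom_rel k (HRel.a2d2 (ξ := ξ))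

theorem Ha_mul_Hd : Ha k ξ * Hd k ξ = Hd k ξ * Ha k ξ := by
  simpa [Ha, Hd] using RingQuot.mkAlgHom_rel k (HRel.ad (ξ := ξ))

theorem Hb_mul_Hc : Hb k ξ * Hc k ξ = 0 := by
  simpa [Hb, Hc] using RingQuot.mkAlgHom_rel k (HRel.bc (ξ := ξ))

theorem Hc_mul_Hb : Hc k ξ * Hb k ξ = 0 := by
  simpa [Hb, Hc] using RingQuot.mkAlgHom_rel k (HRel.cb (ξ := ξ))

theorem Ha_mul_Hb : Ha k ξ * Hb k ξ = ξ • (Hb k ξ * Ha k ξ) := by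
  simpa [Ha, Hb] using RingQuot.mkAlgHom_rel k (HRel.ab (ξ := ξ))

theorem Ha_mul_Hc : Ha k ξ * Hc k ξ = ξ • (Hc k ξ * Ha k ξ) := by
  simpa [Ha, Hc] using RingQuot.mkAlgHom_rel k (HRel.ac (ξ := ξ))

theorem Hd_mul_Hb : Hd k ξ * Hb k ξ = -(ξ • (Hb k ξ * Hd k ξ)) := by
  simpa [Hd, Hb] using RingQuot.mkAlgHom_rel k (HRel.db (ξ := ξ))

theorem Hd_mul_Hc : Hd k ξ * Hc k ξ = -(ξ • (Hc k ξ * Hd k ξ)) := by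
  simpa [Hd, Hc] using RingQuot.mkAlgHom_rel k (HRel.dc (ξ := ξ))

theorem Hb_mul_Hd : Hb k ξ * Hd k ξ = Hc k ξ * Ha k ξ := by
  simpa [Ha, Hb, Hc, Hd] using RingQuot.mkAlgHom_rel k (HRel.bd (ξ := ξ))

theorem Hb_mul_Ha : Hb k ξ * Ha k ξ = Hc k ξ * Hd k ξ := by
  simpa [Ha, Hb, Hc, Hd] using RingQuot.mkAlgHom_rel k (HRel.ba (ξ := ξ))

end Relations

section Spanning

variable (k ξ) in
noncomputable def HGen : Fin 4 → HAlg k ξ := ![Ha k ξ, Hb k ξ, Hc k ξ, Hd k ξ]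

variable (k ξ) in
noncomputable def HBasisHead : Fin 4 → HAlg k ξ := ![1, Hd k ξ, Hb k ξ, Hc k ξ]

theorem mkAlgHom_ι (g : Fin 4) :
    RingQuot.mkAlgHom k (HRel k ξ) (FreeAlgebra.ι k g) = HGen k ξ g := by
  fin_cases g <;> rfl

theorem HBasisElem_eq (t : Fin 4) (i : Fin 6) :
    HBasisElem k ξ (t, i) = HBasisHead k ξ t * Ha k ξ ^ (i : ℕ) := by
  fin_cases t <;> rfl

theorem HBasisHead_mul_Ha_pow_mem (t : Fin 4) (n : ℕ) :
    HBasisHead k ξ t * Ha k ξ ^ n ∈ Submodule.span k (Set.range (HBasisElem k ξ)) := by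
  have hn : Ha k ξ ^ n = Ha k ξ ^ (n % 6) := by
    conv_lhs => rw [← Nat.div_add_mod n 6, pow_add, pow_mul, Ha_pow_six, one_pow, one_mul]
  rw [hn, ← HBasisElem_eq t ⟨n % 6, Nat.mod_lt n (by norm_num)⟩]
  exact Submodule.subset_span ⟨_, rfl⟩

theorem mul_Ha_pow_mem {x : HAlg k ξ} (hx : x ∈ Submodule.span k (Set.range (HBasisElem k ξ)))
    (n : ℕ) : x * Ha k ξ ^ n ∈ Submodule.span k (Set.range (HBasisElem k ξ)) := by
  induction hx using Submodule.span_induction with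
  | mem x hx =>
    obtain ⟨⟨t, i⟩, rfl⟩ := hx
    rw [HBasisElem_eq, mul_assoc, ← pow_add]
    exact HBasisHead_mul_Ha_pow_mem t _
  | zero => simp
  | add x y _ _ hx hy => rw [add_mul]; exact add_mem hx hy
  | smul c x _ hx => rw [smul_mul_assoc]; exact Submodule.smul_mem _ c hx

theorem Ha_pow_mul_HGen (n : ℕ) (g : Fin 4) :
    ∃ c : k, Ha k ξ ^ n * HGen k ξ g = c • (HGen k ξ g * Ha k ξ ^ n) := by
  fin_cases g
  · exact ⟨1, by simp [HGen, ← pow_succ, ← pow_succ']⟩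
  · exact ⟨ξ ^ n, pow_mul_eq_smul_mul_pow Ha_mul_Hb n⟩
  · exact ⟨ξ ^ n, pow_mul_eq_smul_mul_pow Ha_mul_Hc n⟩
  · exact ⟨1, by simpa [HGen] using (Commute.pow_left Ha_mul_Hd n).eq⟩

theorem HBasisHead_mul_HGen_mem (t g : Fin 4) :
    HBasisHead k ξ t * HGen k ξ g ∈ Submodule.span k (Set.range (HBasisElem k ξ)) := by
  have mem := HBasisHead_mul_Ha_pow_mem (k := k) (ξ := ξ)
  fin_cases g
  · simpa [HGen] using mem t 1
  · fin_cases t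
    · simpa [HBasisHead, HGen] using mem 2 0
    · show Hd k ξ * Hb k ξ ∈ _
      rw [Hd_mul_Hb, Hb_mul_Hd]
      exact neg_mem (Submodule.smul_mem _ _ (by simpa [HBasisHead] using mem 3 1))
    · simp [HBasisHead, HGen, Hb_mul_Hb]
    · simp [HBasisHead, HGen, Hc_mul_Hb]
  · fin_cases t
    · simpa [HBasisHead, HGen] using mem 3 0
    · show Hd k ξ * Hc k ξ ∈ _
      rw [Hd_mul_Hc, ← Hb_mul_Ha]
      exact neg_mem (Submodule.smul_mem _ _ (by simpa [HBasisHead] using mem 2 1))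
    · simp [HBasisHead, HGen, Hb_mul_Hc]
    · simp [HBasisHead, HGen, Hc_mul_Hc]
  · fin_cases t
    · simpa [HBasisHead, HGen] using mem 1 0
    · simpa [HBasisHead, HGen, ← Ha_mul_Ha, sq] using mem 0 2
    · simpa [HBasisHead, HGen, Hb_mul_Hd] using mem 3 1
    · simpa [HBasisHead, HGen, ← Hb_mul_Ha] using mem 2 1

theorem mul_HGen_mem {x : HAlg k ξ} (hx : x ∈ Submodule.span k (Set.range (HBasisElem k ξ)))
    (g : Fin 4) : x * HGen k ξ g ∈ Submodule.span k (Set.range (HBasisElem k ξ)) := by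
  induction hx using Submodule.span_induction with
  | mem x hx =>
    obtain ⟨⟨t, i⟩, rfl⟩ := hx
    obtain ⟨c, hc⟩ := Ha_pow_mul_HGen (ξ := ξ) i g
    rw [HBasisElem_eq, mul_assoc, hc, mul_smul_comm, ← mul_assoc]
    exact Submodule.smul_mem _ c (mul_Ha_pow_mem (HBasisHead_mul_HGen_mem t g) i)
  | zero => simp
  | add x y _ _ hx hy => rw [add_mul]; exact add_mem hx hy
  | smul c x _ hx => rw [smul_mul_assoc]; exact Submodule.smul_mem _ c hx

theorem mul_mem_span_HBasisElem {x : HAlg k ξ}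
    (hx : x ∈ Submodule.span k (Set.range (HBasisElem k ξ))) (z : HAlg k ξ) :
    x * z ∈ Submodule.span k (Set.range (HBasisElem k ξ)) := by
  obtain ⟨w, rfl⟩ := RingQuot.mkAlgHom_surjective k (HRel k ξ) z
  induction w using FreeAlgebra.induction generalizing x with
  | grade0 r =>
    rw [AlgHom.commutes, Algebra.algebraMap_eq_smul_one, mul_smul_comm, mul_one]
    exact Submodule.smul_mem _ r hx
  | grade1 g => rw [mkAlgHom_ι]; exact mul_HGen_mem hx g
  | mul u v hu hv => rw [map_mul, ← mul_assoc]; exact hv (hu hx)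
  | add u v hu hv => rw [map_add, mul_add]; exact add_mem (hu hx) (hv hx)

theorem span_HBasisElem_eq_top : Submodule.span k (Set.range (HBasisElem k ξ)) = ⊤ := by
  have one_mem : (1 : HAlg k ξ) ∈ Submodule.span k (Set.range (HBasisElem k ξ)) := by
    simpa [HBasisHead] using HBasisHead_mul_Ha_pow_mem (k := k) (ξ := ξ) 0 0
  exact eq_top_iff.2 fun z _ => by simpa using mul_mem_span_HBasisElem one_mem z

end Spanning

section Representation

variable {R : Type*} [CommRing R] [Algebra k R]

def upperTriGen (ξ : k) (x y : R) : Fin 4 → Matrix (Fin 2) (Fin 2) R :=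
  ![upperTri (algebraMap k R ξ * x) 0 x, upperTri 0 1 0, upperTri 0 y 0,
    upperTri (-(algebraMap k R ξ * x * y)) 0 (x * y)]

theorem upperTriGen_respects_HRel (hξ : ξ ^ 6 = 1) {x y : R} (hx : x ^ 6 = 1) (hy : y ^ 2 = 1)
    ⦃u v : FreeAlgebra k (Fin 4)⦄ (h : HRel k ξ u v) :
    FreeAlgebra.lift k (upperTriGen ξ x y) u = FreeAlgebra.lift k (upperTriGen ξ x y) v := by
  have hq : algebraMap k R ξ ^ 6 = 1 := by rw [← map_pow, hξ, map_one]
  induction h <;>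
    simp only [a₀, b₀, c₀, d₀, map_mul, map_pow, map_smul, map_one, map_zero, map_neg,
      FreeAlgebra.lift_ι_apply, upperTriGen, Matrix.cons_val, upperTri_mul, upperTri_pow,
      upperTri_smul, neg_upperTri, one_eq_upperTri, zero_eq_upperTri, upperTri_inj, sq] <;>
    grind

noncomputable def upperTriRep (hξ : ξ ^ 6 = 1) {x y : R} (hx : x ^ 6 = 1) (hy : y ^ 2 = 1) :
    HAlg k ξ →ₐ[k] Matrix (Fin 2) (Fin 2) R :=
  RingQuot.liftAlgHom k ⟨FreeAlgebra.lift k (upperTriGen ξ x y), upperTriGen_respects_HRel hξ hx hy⟩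

theorem upperTriRep_HBasisElem (hξ : ξ ^ 6 = 1) {x y : R} (hx : x ^ 6 = 1) (hy : y ^ 2 = 1)
    (t : Fin 4) (i : Fin 6) :
    (upperTriRep hξ hx hy (HBasisElem k ξ (t, i)) 0 1,
      upperTriRep hξ hx hy (HBasisElem k ξ (t, i)) 1 1) =
      (![0, 0, 1, y] t * x ^ (i : ℕ), ![1, x * y, 0, 0] t * x ^ (i : ℕ)) := by
  fin_cases t <;>
    simp [HBasisElem, upperTriRep, Ha, Hb, Hc, Hd, a₀, b₀, c₀, d₀, upperTriGen, upperTri_pow,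
      upperTri_mul] <;>
    simp [upperTri]

end Representation

/-- The index, in the standard basis of `k[ℤ/6 × ℤ/2] × k[ℤ/6 × ℤ/2]`, of the last column of
`upperTriRep (HBasisElem k ξ p)` for `x = (1, 0)` and `y = (0, 1)`. -/
def HBasisIndex : Fin 4 × Fin 6 → (ZMod 6 × ZMod 2) ⊕ (ZMod 6 × ZMod 2)
  | (0, i) => .inr ((i : ℕ) • (1, 0))
  | (1, i) => .inr ((1, 1) + (i : ℕ) • (1, 0))
  | (2, i) => .inl ((i : ℕ) • (1, 0))
  | (3, i) => .inl ((0, 1) + (i : ℕ) • (1, 0))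

theorem HBasisIndex_injective : Function.Injective HBasisIndex := by
  decide

open AddMonoidAlgebra in
theorem linearIndependent_HBasisElem (hξ : ξ ^ 6 = 1) : LinearIndependent k (HBasisElem k ξ) := by
  let R := AddMonoidAlgebra k (ZMod 6 × ZMod 2)
  have hx : (single (1, 0) 1 : R) ^ 6 = 1 := by simp [one_def]; rfl
  have hy : (single (0, 1) 1 : R) ^ 2 = 1 := by simp [one_def]; rfl
  let lastCol : Matrix (Fin 2) (Fin 2) R →ₗ[k] R × R :=
    (Matrix.entryLinearMap k R 0 1).prod (Matrix.entryLinearMap k R 1 1)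
  let b := (AddMonoidAlgebra.basis (ZMod 6 × ZMod 2) k).prod
    (AddMonoidAlgebra.basis (ZMod 6 × ZMod 2) k)
  refine LinearIndependent.of_comp (lastCol ∘ₗ (upperTriRep hξ hx hy).toLinearMap) ?_
  have h : ⇑(lastCol ∘ₗ (upperTriRep hξ hx hy).toLinearMap) ∘ HBasisElem k ξ =
      b ∘ HBasisIndex := by
    funext ⟨t, i⟩
    have hcol := upperTriRep_HBasisElem hξ hx hy t i
    fin_cases t <;>
      simpa [lastCol, b, HBasisIndex, Module.Basis.prod_apply, single_mul_single] using hcol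
  rw [h]
  exact b.linearIndependent.comp _ HBasisIndex_injective

end Paper24

theorem stmt_1_general (k : Type) [Field k]
    (ξ : k) (hξ : IsPrimitiveRoot ξ 6) :
    (∃ B : Module.Basis (Fin 4 × Fin 6) k (HAlg k ξ), ∀ p, B p = HBasisElem k ξ p) ∧
    Module.finrank k (HAlg k ξ) = 24 := by
  have hli := linearIndependent_HBasisElem hξ.pow_eq_one
  have hsp := (span_HBasisElem_eq_top (k := k) (ξ := ξ)).ge
  refine ⟨⟨Module.Basis.mk hli hsp, Module.Basis.mk_apply hli hsp⟩, ?_⟩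
  simp [Module.finrank_eq_card_basis (Module.Basis.mk hli hsp)]

theorem stmt_1 (k : Type) [Field k] [IsAlgClosed k] [CharZero k]
    (ξ : k) (hξ : IsPrimitiveRoot ξ 6) :
    (∃ B : Module.Basis (Fin 4 × Fin 6) k (HAlg k ξ), ∀ p, B p = HBasisElem k ξ p) ∧
    Module.finrank k (HAlg k ξ) = 24 :=
  stmt_1_general k ξ hξ
end

section
/- For each (i,j,k) ∈ {0,1}×{0,1}×{0,...,5} there is a unique algebra homomorphism χ_{i,j,k} : D → k with χ_{i,j,k}(g) = (−1)^i, χ_{i,j,k}(h) = (−1)^j, χ_{i,j,k}(x) = 0, χ_{i,j,k}(a) = ξ^k, χ_{i,j,k}(b) = 0, χ_{i,j,k}(c) = 0, χ_{i,j,k}(d) = (−1)^{i+j} ξ^k; these 24 homomorphisms are pairwise distinct, and every algebra homomorphism D → k equals χ_{i,j,k} for some such (i,j,k). -/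
/- STATEMENT 6: For each (i,j,k) ∈ {0,1}×{0,1}×{0,...,5} there is a unique algebra
homomorphism χ_{i,j,k} : D → k with the prescribed values on the generators; these 24
homomorphisms are pairwise distinct, and every algebra homomorphism D → k is one of them. -/

open scoped TensorProduct

namespace Paper24

variable (k : Type) [Field k] (ξ s : k)

/-- The generator `g` of the free algebra on seven generators. -/
noncomputable def dg : FreeAlgebra k (Fin 7) := FreeAlgebra.ι k 0
/-- The generator `h`. -/
noncomputable def dh : FreeAlgebra k (Fin 7) := FreeAlgebra.ι k 1
/-- The generator `x`. -/
noncomputable def dx : FreeAlgebra k (Fin 7) := FreeAlgebra.ι k 2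
/-- The generator `a`. -/
noncomputable def da : FreeAlgebra k (Fin 7) := FreeAlgebra.ι k 3
/-- The generator `b`. -/
noncomputable def db : FreeAlgebra k (Fin 7) := FreeAlgebra.ι k 4
/-- The generator `c`. -/
noncomputable def dc : FreeAlgebra k (Fin 7) := FreeAlgebra.ι k 5
/-- The generator `d`. -/
noncomputable def dd : FreeAlgebra k (Fin 7) := FreeAlgebra.ι k 6

/-- The defining relations of the Drinfeld double `D = D(H^cop)`; `s` denotes the chosen
square root of `1 - ξ^2`. -/
inductive DRel : FreeAlgebra k (Fin 7) → FreeAlgebra k (Fin 7) → Prop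
  -- the relations of H^cop
  | a6 : DRel (da k ^ 6) 1
  | b2 : DRel (db k ^ 2) 0
  | c2 : DRel (dc k ^ 2) 0
  | d6 : DRel (dd k ^ 6) 1
  | a2d2 : DRel (da k ^ 2) (dd k ^ 2)
  | ad : DRel (da k * dd k) (dd k * da k)
  | bc : DRel (db k * dc k) 0
  | cb : DRel (dc k * db k) 0
  | ab : DRel (da k * db k) (ξ • (db k * da k))
  | ac : DRel (da k * dc k) (ξ • (dc k * da k))
  | dbr : DRel (dd k * db k) (-(ξ • (db k * dd k)))
  | dcr : DRel (dd k * dc k) (-(ξ • (dc k * dd k)))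
  | bd : DRel (db k * dd k) (dc k * da k)
  | ba : DRel (db k * da k) (dc k * dd k)
  -- the relations of A^bop
  | g6 : DRel (dg k ^ 6) 1
  | h2 : DRel (dh k ^ 2) 1
  | gh : DRel (dg k * dh k) (dh k * dg k)
  | gx : DRel (dg k * dx k) (dx k * dg k)
  | hx : DRel (dh k * dx k) (-(dx k * dh k))
  | x2 : DRel (dx k ^ 2) (1 - dg k ^ 2)
  -- the cross relations
  | ag : DRel (da k * dg k) (dg k * da k)
  | ah : DRel (da k * dh k) (dh k * da k)
  | dgr : DRel (dd k * dg k) (dg k * dd k)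
  | dhr : DRel (dd k * dh k) (dh k * dd k)
  | bg : DRel (db k * dg k) (dg k * db k)
  | bh : DRel (db k * dh k) (-(dh k * db k))
  | cg : DRel (dc k * dg k) (dg k * dc k)
  | ch : DRel (dc k * dh k) (-(dh k * dc k))
  | ax : DRel (da k * dx k - ξ⁻¹ • (dx k * da k))
      (-((s * ξ⁻¹) • (dc k - dg k * dh k * db k)))
  | dxr : DRel (dd k * dx k + ξ⁻¹ • (dx k * dd k))
      (-((s * ξ⁻¹) • (dg k * dh k * dc k - db k)))
  | bx : DRel (db k * dx k - ξ⁻¹ • (dx k * db k))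
      (-((s * ξ⁻¹) • (dd k - dg k * dh k * da k)))
  | cx : DRel (dc k * dx k + ξ⁻¹ • (dx k * dc k))
      (-((s * ξ⁻¹) • (dg k * dh k * dd k - da k)))

/-- The Drinfeld double `D = D(H^cop)` as a quotient of the free algebra on seven
generators. -/
noncomputable abbrev DAlg := RingQuot (DRel k ξ s)

/-- The image of `g` in `D`. -/
noncomputable def Dg : DAlg k ξ s := RingQuot.mkAlgHom k (DRel k ξ s) (dg k)
/-- The image of `h` in `D`. -/
noncomputable def Dh : DAlg k ξ s := RingQuot.mkAlgHom k (DRel k ξ s) (dh k)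
/-- The image of `x` in `D`. -/
noncomputable def Dx : DAlg k ξ s := RingQuot.mkAlgHom k (DRel k ξ s) (dx k)
/-- The image of `a` in `D`. -/
noncomputable def Da : DAlg k ξ s := RingQuot.mkAlgHom k (DRel k ξ s) (da k)
/-- The image of `b` in `D`. -/
noncomputable def Db : DAlg k ξ s := RingQuot.mkAlgHom k (DRel k ξ s) (db k)
/-- The image of `c` in `D`. -/
noncomputable def Dc : DAlg k ξ s := RingQuot.mkAlgHom k (DRel k ξ s) (dc k)
/-- The image of `d` in `D`. -/
noncomputable def Dd : DAlg k ξ s := RingQuot.mkAlgHom k (DRel k ξ s) (dd k)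

/-- The property that an algebra homomorphism `χ : D → k` is the character `χ_{i,j,m}`. -/
def IsChi (i j m : ℕ) (χ : DAlg k ξ s →ₐ[k] k) : Prop :=
  χ (Dg k ξ s) = (-1 : k) ^ i ∧ χ (Dh k ξ s) = (-1 : k) ^ j ∧ χ (Dx k ξ s) = 0 ∧
  χ (Da k ξ s) = ξ ^ m ∧ χ (Db k ξ s) = 0 ∧ χ (Dc k ξ s) = 0 ∧
  χ (Dd k ξ s) = (-1 : k) ^ (i + j) * ξ ^ m

section Aux

variable {k : Type} [Field k] {ξ s : k}

/-- Auxiliary map on the free algebra. -/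
noncomputable def chiFree (k : Type) [Field k] (G H A : k) :
    FreeAlgebra k (Fin 7) →ₐ[k] k :=
  FreeAlgebra.lift k ![G, H, 0, A, 0, 0, G * H * A]

theorem chiFree_rel {G H A : k} (hG : G ^ 2 = 1) (hH : H ^ 2 = 1) (hA : A ^ 6 = 1) :
    ∀ ⦃x y⦄, DRel k ξ s x y → chiFree k G H A x = chiFree k G H A y := by
  have hG6 : G ^ 6 = 1 := by rw [show (6:ℕ) = 2*3 from rfl, pow_mul, hG, one_pow]
  have hH6 : H ^ 6 = 1 := by rw [show (6:ℕ) = 2*3 from rfl, pow_mul, hH, one_pow]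
  have e5 : ![G, H, 0, A, 0, 0, G * H * A] (5 : Fin 7) = 0 := rfl
  have e6 : ![G, H, 0, A, 0, 0, G * H * A] (6 : Fin 7) = G * H * A := rfl
  intro x y r
  induction r <;>
    simp only [chiFree, dg, dh, dx, da, db, dc, dd, map_pow, map_mul, map_one, map_zero,
      map_smul, map_sub, map_add, map_neg, FreeAlgebra.lift_ι_apply, Matrix.cons_val_zero,
      Matrix.cons_val_one, Matrix.head_cons, Matrix.cons_val_two, Matrix.tail_cons,
      Matrix.cons_val_three, Matrix.cons_val_four, e5, e6, smul_eq_mul]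
  case a6 => exact hA
  case b2 => ring
  case c2 => ring
  case d6 => rw [mul_pow, mul_pow, hG6, hH6, hA]; ring
  case a2d2 => rw [mul_pow, mul_pow, hG, hH]; ring
  case ad => ring
  case bc => ring
  case cb => ring
  case ab => ring
  case ac => ring
  case dbr => ring
  case dcr => ring
  case bd => ring
  case ba => ring
  case g6 => exact hG6
  case h2 => exact hH
  case gh => ring
  case gx => ring
  case hx => ring
  case x2 => rw [hG]; ring
  case ag => ring
  case ah => ring
  case dgr => ring
  case dhr => ring
  case bg => ring
  case bh => ring
  case cg => ring
  case ch => ring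
  case ax => ring
  case dxr => ring
  case bx => ring
  case cx => linear_combination (s * ξ⁻¹ * H ^ 2 * A) * hG + (s * ξ⁻¹ * A) * hH

/-- The character on `D` with prescribed values. -/
noncomputable def chiD (k : Type) [Field k] (ξ s : k) {G H A : k}
    (hG : G ^ 2 = 1) (hH : H ^ 2 = 1) (hA : A ^ 6 = 1) :
    DAlg k ξ s →ₐ[k] k :=
  RingQuot.liftAlgHom k ⟨chiFree k G H A, chiFree_rel hG hH hA⟩

theorem chiD_apply (k : Type) [Field k] (ξ s : k) {G H A : k}
    (hG : G ^ 2 = 1) (hH : H ^ 2 = 1) (hA : A ^ 6 = 1) (n : Fin 7) :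
    chiD k ξ s hG hH hA (RingQuot.mkAlgHom k (DRel k ξ s) (FreeAlgebra.ι k n)) =
      ![G, H, 0, A, 0, 0, G * H * A] n := by
  simp [chiD, chiFree, RingQuot.liftAlgHom_mkAlgHom_apply]

theorem DAlg.hom_ext {χ χ' : DAlg k ξ s →ₐ[k] k}
    (h : ∀ n : Fin 7, χ (RingQuot.mkAlgHom k (DRel k ξ s) (FreeAlgebra.ι k n)) =
      χ' (RingQuot.mkAlgHom k (DRel k ξ s) (FreeAlgebra.ι k n))) : χ = χ' := by
  have h2 : χ.comp (RingQuot.mkAlgHom k (DRel k ξ s)) =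
      χ'.comp (RingQuot.mkAlgHom k (DRel k ξ s)) :=
    FreeAlgebra.hom_ext (funext fun n => h n)
  refine DFunLike.ext _ _ fun z => ?_
  obtain ⟨p, rfl⟩ := RingQuot.mkAlgHom_surjective k (DRel k ξ s) z
  exact AlgHom.congr_fun h2 p

theorem chi_rel (χ : DAlg k ξ s →ₐ[k] k) {x y : FreeAlgebra k (Fin 7)}
    (r : DRel k ξ s x y) :
    χ (RingQuot.mkAlgHom k (DRel k ξ s) x) = χ (RingQuot.mkAlgHom k (DRel k ξ s) y) :=
  congrArg χ (RingQuot.mkAlgHom_rel k r)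

end Aux

end Paper24

open Paper24

theorem stmt_6 (k : Type) [Field k] [IsAlgClosed k] [CharZero k]
    (ξ : k) (hξ : IsPrimitiveRoot ξ 6) (s : k) (hs : s ^ 2 = 1 - ξ ^ 2) :
    -- existence and uniqueness
    (∀ i j m : ℕ, i < 2 → j < 2 → m < 6 →
      ∃! χ : DAlg k ξ s →ₐ[k] k, IsChi k ξ s i j m χ) ∧
    -- pairwise distinctness (distinct parameters give distinct characters)
    (∀ i j m i' j' m' : ℕ, i < 2 → j < 2 → m < 6 → i' < 2 → j' < 2 → m' < 6 →
      ∀ χ : DAlg k ξ s →ₐ[k] k, IsChi k ξ s i j m χ → IsChi k ξ s i' j' m' χ →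
        i = i' ∧ j = j' ∧ m = m') ∧
    -- exhaustiveness
    (∀ χ : DAlg k ξ s →ₐ[k] k, ∃ i j m : ℕ, i < 2 ∧ j < 2 ∧ m < 6 ∧ IsChi k ξ s i j m χ) := by
  have hξ6 : ξ ^ 6 = 1 := hξ.pow_eq_one
  have hξne : ξ ≠ 0 := by
    intro h; rw [h] at hξ6; norm_num at hξ6
  have hξ2 : ξ ^ 2 ≠ 1 := by
    intro h
    have := hξ.dvd_of_pow_eq_one 2 h
    omega
  have hsne : s ≠ 0 := by
    intro h; rw [h] at hs; norm_num at hs; exact hξ2 (by linear_combination hs)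
  refine ⟨?_, ?_, ?_⟩
  · -- existence and uniqueness
    intro i j m hi hj hm
    have hG : ((-1 : k) ^ i) ^ 2 = 1 := by
      rw [← pow_mul, mul_comm, pow_mul, neg_one_sq, one_pow]
    have hH : ((-1 : k) ^ j) ^ 2 = 1 := by
      rw [← pow_mul, mul_comm, pow_mul, neg_one_sq, one_pow]
    have hA : (ξ ^ m) ^ 6 = 1 := by
      rw [← pow_mul, mul_comm, pow_mul, hξ6, one_pow]
    refine ⟨chiD k ξ s hG hH hA, ?_, ?_⟩
    · refine ⟨?_, ?_, ?_, ?_, ?_, ?_, ?_⟩ <;>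
        simp only [Dg, Dh, Dx, Da, Db, Dc, Dd, dg, dh, dx, da, db, dc, dd] <;>
        rw [chiD_apply]
      case _ => rfl
      case _ => rfl
      case _ => rfl
      case _ => rfl
      case _ => rfl
      case _ => rfl
      case _ =>
        show (-1 : k) ^ i * (-1 : k) ^ j * ξ ^ m = (-1 : k) ^ (i + j) * ξ ^ m
        rw [pow_add]
    · intro χ' hχ'
      obtain ⟨h0, h1, h2, h3, h4, h5, h6⟩ := hχ'
      refine (DAlg.hom_ext fun n => ?_).symm
      fin_cases n <;> rw [chiD_apply]
      · exact h0.symm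
      · exact h1.symm
      · exact h2.symm
      · exact h3.symm
      · exact h4.symm
      · exact h5.symm
      · show (-1 : k) ^ i * (-1 : k) ^ j * ξ ^ m = χ' _
        rw [← pow_add]; exact h6.symm
  · -- distinctness
    intro i j m i' j' m' hi hj hm hi' hj' hm' χ h h'
    obtain ⟨h0, h1, _, h3, _, _, _⟩ := h
    obtain ⟨h0', h1', _, h3', _, _, _⟩ := h'
    have hii : i = i' := by
      interval_cases i <;> interval_cases i' <;>
        first
          | rfl
          | (exfalso; have := h0.symm.trans h0'; norm_num at this)
    have hjj : j = j' := by
      interval_cases j <;> interval_cases j' <;>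
        first
          | rfl
          | (exfalso; have := h1.symm.trans h1'; norm_num at this)
    have hmm : m = m' := hξ.pow_inj hm hm' (h3 ▸ h3' ▸ rfl)
    exact ⟨hii, hjj, hmm⟩
  · -- exhaustiveness
    intro χ
    set mk := RingQuot.mkAlgHom k (DRel k ξ s) with hmk
    -- b and c vanish
    have hb2 := chi_rel χ (DRel.b2 (k := k) (ξ := ξ) (s := s))
    simp only [map_pow, map_zero] at hb2
    have hB : χ (Db k ξ s) = 0 := by
      have := pow_eq_zero_iff (n := 2) (by norm_num) |>.mp hb2
      simpa [Db, hmk] using this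
    have hc2 := chi_rel χ (DRel.c2 (k := k) (ξ := ξ) (s := s))
    simp only [map_pow, map_zero] at hc2
    have hC : χ (Dc k ξ s) = 0 := by
      have := pow_eq_zero_iff (n := 2) (by norm_num) |>.mp hc2
      simpa [Dc, hmk] using this
    -- h squares to 1
    have hH2 : χ (Dh k ξ s) ^ 2 = 1 := by
      have := chi_rel χ (DRel.h2 (k := k) (ξ := ξ) (s := s))
      simpa [Dh, hmk, map_pow] using this
    have hHne : χ (Dh k ξ s) ≠ 0 := by
      intro h; rw [h] at hH2; norm_num at hH2
    -- x vanishes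
    have hX : χ (Dx k ξ s) = 0 := by
      have := chi_rel χ (DRel.hx (k := k) (ξ := ξ) (s := s))
      simp only [map_mul, map_neg] at this
      have h2 : (2 : k) * (χ (mk (dx k)) * χ (mk (dh k))) = 0 := by
        linear_combination this
      have := mul_eq_zero.mp h2
      rcases this with h | h
      · norm_num at h
      · rcases mul_eq_zero.mp h with h | h
        · simpa [Dx, hmk] using h
        · exact absurd (by simpa [Dh, hmk] using h) hHne
    -- g squares to 1
    have hG2 : χ (Dg k ξ s) ^ 2 = 1 := by
      have := chi_rel χ (DRel.x2 (k := k) (ξ := ξ) (s := s))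
      simp only [map_pow, map_sub, map_one] at this
      have hx0 : χ (mk (dx k)) = 0 := by simpa [Dx, hmk] using hX
      rw [hx0] at this
      have : χ (mk (dg k)) ^ 2 = 1 := by linear_combination this
      simpa [Dg, hmk] using this
    -- a is a 6th root of unity
    have hA6 : χ (Da k ξ s) ^ 6 = 1 := by
      have := chi_rel χ (DRel.a6 (k := k) (ξ := ξ) (s := s))
      simpa [Da, hmk, map_pow] using this
    -- d = g h a
    have hD : χ (Dd k ξ s) = χ (Dg k ξ s) * χ (Dh k ξ s) * χ (Da k ξ s) := by
      have := chi_rel χ (DRel.bx (k := k) (ξ := ξ) (s := s))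
      simp only [map_sub, map_mul, map_smul, map_neg, smul_eq_mul] at this
      have hb0 : χ (mk (db k)) = 0 := by simpa [Db, hmk] using hB
      rw [hb0] at this
      simp only [mul_zero, zero_mul, sub_zero, zero_sub, neg_eq_iff_eq_neg] at this
      have h0 : (s * ξ⁻¹) * (χ (mk (dd k)) - χ (mk (dg k)) * χ (mk (dh k)) * χ (mk (da k))) = 0 := by
        linear_combination this
      have h1 : χ (mk (dd k)) - χ (mk (dg k)) * χ (mk (dh k)) * χ (mk (da k)) = 0 := by
        rcases mul_eq_zero.mp h0 with h | h
        · exact absurd h (mul_ne_zero hsne (inv_ne_zero hξne))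
        · exact h
      have := sub_eq_zero.mp h1
      simpa [Dd, Dg, Dh, Da, hmk] using this
    -- choose i, j, m
    obtain ⟨m, hm6, hmA⟩ := hξ.eq_pow_of_pow_eq_one hA6
    have hGpm : χ (Dg k ξ s) = 1 ∨ χ (Dg k ξ s) = -1 :=
      mul_self_eq_one_iff.mp (by rw [← pow_two]; exact hG2)
    have hHpm : χ (Dh k ξ s) = 1 ∨ χ (Dh k ξ s) = -1 :=
      mul_self_eq_one_iff.mp (by rw [← pow_two]; exact hH2)
    rcases hGpm with hg | hg <;> rcases hHpm with hh | hh
    · exact ⟨0, 0, m, by norm_num, by norm_num, hm6, by simpa using hg,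
        by simpa using hh, hX, hmA.symm, hB, hC,
        by rw [hD, hg, hh, ← hmA]; norm_num⟩
    · exact ⟨0, 1, m, by norm_num, by norm_num, hm6, by simpa using hg,
        by simpa using hh, hX, hmA.symm, hB, hC,
        by rw [hD, hg, hh, ← hmA]; norm_num⟩
    · exact ⟨1, 0, m, by norm_num, by norm_num, hm6, by simpa using hg,
        by simpa using hh, hX, hmA.symm, hB, hC,
        by rw [hD, hg, hh, ← hmA]; norm_num⟩
    · exact ⟨1, 1, m, by norm_num, by norm_num, hm6, by simpa using hg,
        by simpa using hh, hX, hmA.symm, hB, hC,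
        by rw [hD, hg, hh, ← hmA]; norm_num⟩
end

section
/- Let (i,j,k,ι) ∈ Λ, let V = k^2 with basis v1, v2, and let c : V⊗V → V⊗V be the linear map defined as follows. If k = 0: c(v1⊗v1) = (−1)^{(ι+1)j} ξ^{ij} v1⊗v1; c(v1⊗v2) = (−1)^{jι} ξ^{(i+2)j} v2⊗v1 + [(−1)^{(ι+1)j} ξ^{ij} + (−1)^{(j−1)ι} ξ^{(i+2)j}] v1⊗v2; c(v2⊗v1) = (−1)^{(ι+1)(j−1)} ξ^{ij} v1⊗v2; c(v2⊗v2) = (−1)^{(j−1)ι} ξ^{(i+2)j} v2⊗v2 + (1−ξ^2)^{−1} (−1)^{ι(j−1)} ξ^{(j−2)i+2j−1} (ξ^j − (−1)^ι) v1⊗v1. If k = 1: c(v1⊗v1) = (−1)^{(j−1)(ι+1)} ξ^{ij} v1⊗v1; c(v1⊗v2) = (−1)^{(j−1)ι} ξ^{(i+2)j} v2⊗v1 + [(−1)^{(j−1)(ι+1)} ξ^{ij} + (−1)^{jι} ξ^{(i+2)j}] v1⊗v2; c(v2⊗v1) = (−1)^{(ι+1)j} ξ^{ij} v1⊗v2;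 c(v2⊗v2) = (−1)^{jι} ξ^{(i+2)j} v2⊗v2 + (1−ξ^2)^{−1} (−1)^{jι} ξ^{2j+2+ij+4i} (ξ^j + (−1)^ι) v1⊗v1. Then c is a bijection and satisfies the braid equation (c⊗id)(id⊗c)(c⊗id) = (id⊗c)(c⊗id)(id⊗c) on V⊗V⊗V. -/
/- Write `a` and `e` for the diagonal coefficients of `c` on `v₁ ⊗ v₁` and `v₂ ⊗ v₂`. In both cases
`k = 0, 1` the coefficient of `c(v₂ ⊗ v₁)` is `ε a` and the `v₂ ⊗ v₁`-coefficient of `c(v₁ ⊗ v₂)` is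
`-ε e`, where `ε = (-1)^(ι+1)`, while the `v₁ ⊗ v₂`-coefficient of `c(v₁ ⊗ v₂)` is `a + e`. Any such
map on a two-dimensional space is triangular with invertible diagonal, hence bijective, and satisfies
the braid equation for every value of the coefficient of `v₁ ⊗ v₁` in `c(v₂ ⊗ v₂)`: this is checked
on the eight basis vectors `vₐ ⊗ v_b ⊗ v_c`, separately for `ε = 1` and `ε = -1`. -/

open scoped TensorProduct

namespace Paper24

/-- Membership of `(i,j,k,ι)` in the index set `Λ`: `j + 3k ≢ 3(ι+1) mod 6`. -/
def inLambda (i j kk ι : ℕ) : Prop :=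
  i < 6 ∧ j < 6 ∧ kk < 2 ∧ ι < 2 ∧
    ((j : ZMod 6) + 3 * (kk : ZMod 6) ≠ 3 * ((ι : ZMod 6) + 1))

/-- The first basis vector `v₁` of `k²`. -/
noncomputable def e₁ (k : Type) [Field k] : Fin 2 → k := ![1, 0]
/-- The second basis vector `v₂` of `k²`. -/
noncomputable def e₂ (k : Type) [Field k] : Fin 2 → k := ![0, 1]

end Paper24

open Paper24

section BraidEquation

variable {R V : Type*} [CommSemiring R] [AddCommMonoid V] [Module R V]

def lTensorAssoc (c : V ⊗[R] V →ₗ[R] V ⊗[R] V) : (V ⊗[R] V) ⊗[R] V →ₗ[R] (V ⊗[R] V) ⊗[R] V :=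
  (TensorProduct.assoc R V V V).symm.toLinearMap ∘ₗ c.lTensor V ∘ₗ
    (TensorProduct.assoc R V V V).toLinearMap

@[simp]
lemma lTensorAssoc_tmul (c : V ⊗[R] V →ₗ[R] V ⊗[R] V) (x y z : V) :
    lTensorAssoc c ((x ⊗ₜ y) ⊗ₜ z) = (TensorProduct.assoc R V V V).symm (x ⊗ₜ c (y ⊗ₜ z)) := by
  simp [lTensorAssoc]

def SatisfiesBraidEquation (c : V ⊗[R] V →ₗ[R] V ⊗[R] V) : Prop :=
  c.rTensor V ∘ₗ lTensorAssoc c ∘ₗ c.rTensor V = lTensorAssoc c ∘ₗ c.rTensor V ∘ₗ lTensorAssoc c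

end BraidEquation

section TwoDimensional

open LinearMap

variable {R V : Type*} [AddCommGroup V]

theorem bijective_of_apply_basis [Field R] [Module R V] (b : Module.Basis (Fin 2) R V)
    {c : V ⊗[R] V →ₗ[R] V ⊗[R] V} {a f bb d e z : R}
    (ha : a ≠ 0) (hbb : bb ≠ 0) (hd : d ≠ 0) (he : e ≠ 0)
    (h11 : c (b 0 ⊗ₜ b 0) = a • (b 0 ⊗ₜ b 0))
    (h12 : c (b 0 ⊗ₜ b 1) = bb • (b 1 ⊗ₜ b 0) + f • (b 0 ⊗ₜ b 1))
    (h21 : c (b 1 ⊗ₜ b 0) = d • (b 0 ⊗ₜ b 1))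
    (h22 : c (b 1 ⊗ₜ b 1) = e • (b 1 ⊗ₜ b 1) + z • (b 0 ⊗ₜ b 0)) :
    Function.Bijective c := by
  have := Module.Finite.of_basis b
  suffices hsurj : Function.Surjective c from ⟨injective_iff_surjective.2 hsurj, hsurj⟩
  -- `c` is triangular for the order `v₁v₁, v₁v₂, v₂v₁, v₂v₂` of the basis, with nonzero diagonal.
  have m00 : b 0 ⊗ₜ b 0 ∈ range c :=
    ⟨a⁻¹ • (b 0 ⊗ₜ b 0), by rw [map_smul, h11, smul_smul, inv_mul_cancel₀ ha, one_smul]⟩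
  have m01 : b 0 ⊗ₜ b 1 ∈ range c :=
    ⟨d⁻¹ • (b 1 ⊗ₜ b 0), by rw [map_smul, h21, smul_smul, inv_mul_cancel₀ hd, one_smul]⟩
  have m10 : b 1 ⊗ₜ b 0 ∈ range c := by
    have : b 1 ⊗ₜ b 0 = bb⁻¹ • (c (b 0 ⊗ₜ b 1) - f • (b 0 ⊗ₜ b 1)) := by
      rw [h12, add_sub_cancel_right, smul_smul, inv_mul_cancel₀ hbb, one_smul]
    rw [this]
    exact Submodule.smul_mem _ _ (sub_mem (mem_range_self c _) (Submodule.smul_mem _ _ m01))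
  have m11 : b 1 ⊗ₜ b 1 ∈ range c := by
    have : b 1 ⊗ₜ b 1 = e⁻¹ • (c (b 1 ⊗ₜ b 1) - z • (b 0 ⊗ₜ b 0)) := by
      rw [h22, add_sub_cancel_right, smul_smul, inv_mul_cancel₀ he, one_smul]
    rw [this]
    exact Submodule.smul_mem _ _ (sub_mem (mem_range_self c _) (Submodule.smul_mem _ _ m00))
  rw [← range_eq_top, eq_top_iff, ← (b.tensorProduct b).span_eq, Submodule.span_le]
  rintro _ ⟨⟨p, q⟩, rfl⟩
  rw [Module.Basis.tensorProduct_apply]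
  fin_cases p <;> fin_cases q
  exacts [m00, m01, m10, m11]

theorem satisfiesBraidEquation_of_apply_basis [CommRing R] [Module R V]
    (b : Module.Basis (Fin 2) R V) {c : V ⊗[R] V →ₗ[R] V ⊗[R] V} {ε a bb d e z : R}
    (hε : ε = 1 ∨ ε = -1) (hd : d = ε * a) (hbb : bb = -(ε * e))
    (h11 : c (b 0 ⊗ₜ b 0) = a • (b 0 ⊗ₜ b 0))
    (h12 : c (b 0 ⊗ₜ b 1) = bb • (b 1 ⊗ₜ b 0) + (a + e) • (b 0 ⊗ₜ b 1))
    (h21 : c (b 1 ⊗ₜ b 0) = d • (b 0 ⊗ₜ b 1))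
    (h22 : c (b 1 ⊗ₜ b 1) = e • (b 1 ⊗ₜ b 1) + z • (b 0 ⊗ₜ b 0)) :
    SatisfiesBraidEquation c := by
  subst hd hbb
  refine ((b.tensorProduct b).tensorProduct b).ext fun ⟨⟨p, q⟩, r⟩ => ?_
  rw [Module.Basis.tensorProduct_apply, Module.Basis.tensorProduct_apply]
  rcases hε with rfl | rfl <;> fin_cases p <;> fin_cases q <;> fin_cases r <;>
    · simp only [Fin.zero_eta, Fin.mk_one, comp_apply, rTensor_tmul, lTensorAssoc_tmul,
        h11, h12, h21, h22, map_add, map_smul, TensorProduct.add_tmul, TensorProduct.tmul_add,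
        ← TensorProduct.smul_tmul', TensorProduct.tmul_smul, TensorProduct.assoc_symm_tmul,
        smul_add, smul_smul] <;>
      match_scalars <;> ring

theorem bijective_and_satisfiesBraidEquation_of_apply_basis [Field R] [Module R V]
    (b : Module.Basis (Fin 2) R V) {c : V ⊗[R] V →ₗ[R] V ⊗[R] V} {ε a bb d e z : R}
    (hε : ε = 1 ∨ ε = -1) (ha : a ≠ 0) (he : e ≠ 0) (hd : d = ε * a) (hbb : bb = -(ε * e))
    (h11 : c (b 0 ⊗ₜ b 0) = a • (b 0 ⊗ₜ b 0))
    (h12 : c (b 0 ⊗ₜ b 1) = bb • (b 1 ⊗ₜ b 0) + (a + e) • (b 0 ⊗ₜ b 1))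
    (h21 : c (b 1 ⊗ₜ b 0) = d • (b 0 ⊗ₜ b 1))
    (h22 : c (b 1 ⊗ₜ b 1) = e • (b 1 ⊗ₜ b 1) + z • (b 0 ⊗ₜ b 0)) :
    Function.Bijective c ∧ SatisfiesBraidEquation c := by
  have hε0 : ε ≠ 0 := by rcases hε with rfl | rfl <;> simp
  refine ⟨bijective_of_apply_basis b ha ?_ ?_ he h11 h12 h21 h22,
    satisfiesBraidEquation_of_apply_basis b hε hd hbb h11 h12 h21 h22⟩
  · rw [hbb]; exact neg_ne_zero.2 (mul_ne_zero hε0 he)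
  · rw [hd]; exact mul_ne_zero hε0 ha

end TwoDimensional

lemma neg_one_zpow_mul_of_even {K : Type*} [DivisionRing K] {p q r : ℤ} (h : Even (p - (q + r)))
    (x : K) : (-1 : K) ^ p * x = (-1) ^ q * ((-1) ^ r * x) := by
  have h1 : (-1 : K) ≠ 0 := neg_ne_zero.2 one_ne_zero
  rw [← mul_assoc, ← zpow_add₀ h1, ← sub_add_cancel p (q + r), zpow_add₀ h1, h.neg_one_zpow,
    one_mul]

theorem stmt_9_general (k : Type) [Field k]
    (ξ : k) (hξ : IsPrimitiveRoot ξ 6)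
    (i j kk ι : ℕ) (hΛ : inLambda i j kk ι)
    (c : ((Fin 2 → k) ⊗[k] (Fin 2 → k)) →ₗ[k] ((Fin 2 → k) ⊗[k] (Fin 2 → k)))
    -- the values of c in the case k = 0
    (h0 : kk = 0 →
      (c (e₁ k ⊗ₜ[k] e₁ k)
          = ((-1 : k) ^ (((ι : ℤ) + 1) * (j : ℤ)) * ξ ^ ((i : ℤ) * (j : ℤ))) •
              (e₁ k ⊗ₜ[k] e₁ k) ∧
       c (e₁ k ⊗ₜ[k] e₂ k)
          = ((-1 : k) ^ ((j : ℤ) * (ι : ℤ)) * ξ ^ (((i : ℤ) + 2) * (j : ℤ))) •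
              (e₂ k ⊗ₜ[k] e₁ k)
            + ((-1 : k) ^ (((ι : ℤ) + 1) * (j : ℤ)) * ξ ^ ((i : ℤ) * (j : ℤ))
               + (-1 : k) ^ (((j : ℤ) - 1) * (ι : ℤ)) * ξ ^ (((i : ℤ) + 2) * (j : ℤ))) •
              (e₁ k ⊗ₜ[k] e₂ k) ∧
       c (e₂ k ⊗ₜ[k] e₁ k)
          = ((-1 : k) ^ (((ι : ℤ) + 1) * ((j : ℤ) - 1)) * ξ ^ ((i : ℤ) * (j : ℤ))) •
              (e₁ k ⊗ₜ[k] e₂ k) ∧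
       c (e₂ k ⊗ₜ[k] e₂ k)
          = ((-1 : k) ^ (((j : ℤ) - 1) * (ι : ℤ)) * ξ ^ (((i : ℤ) + 2) * (j : ℤ))) •
              (e₂ k ⊗ₜ[k] e₂ k)
            + ((1 - ξ ^ 2)⁻¹ * (-1 : k) ^ ((ι : ℤ) * ((j : ℤ) - 1))
                * ξ ^ (((j : ℤ) - 2) * (i : ℤ) + 2 * (j : ℤ) - 1)
                * (ξ ^ (j : ℤ) - (-1 : k) ^ (ι : ℤ))) •
              (e₁ k ⊗ₜ[k] e₁ k)))
    -- the values of c in the case k = 1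
    (h1 : kk = 1 →
      (c (e₁ k ⊗ₜ[k] e₁ k)
          = ((-1 : k) ^ (((j : ℤ) - 1) * ((ι : ℤ) + 1)) * ξ ^ ((i : ℤ) * (j : ℤ))) •
              (e₁ k ⊗ₜ[k] e₁ k) ∧
       c (e₁ k ⊗ₜ[k] e₂ k)
          = ((-1 : k) ^ (((j : ℤ) - 1) * (ι : ℤ)) * ξ ^ (((i : ℤ) + 2) * (j : ℤ))) •
              (e₂ k ⊗ₜ[k] e₁ k)
            + ((-1 : k) ^ (((j : ℤ) - 1) * ((ι : ℤ) + 1)) * ξ ^ ((i : ℤ) * (j : ℤ))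
               + (-1 : k) ^ ((j : ℤ) * (ι : ℤ)) * ξ ^ (((i : ℤ) + 2) * (j : ℤ))) •
              (e₁ k ⊗ₜ[k] e₂ k) ∧
       c (e₂ k ⊗ₜ[k] e₁ k)
          = ((-1 : k) ^ (((ι : ℤ) + 1) * (j : ℤ)) * ξ ^ ((i : ℤ) * (j : ℤ))) •
              (e₁ k ⊗ₜ[k] e₂ k) ∧
       c (e₂ k ⊗ₜ[k] e₂ k)
          = ((-1 : k) ^ ((j : ℤ) * (ι : ℤ)) * ξ ^ (((i : ℤ) + 2) * (j : ℤ))) •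
              (e₂ k ⊗ₜ[k] e₂ k)
            + ((1 - ξ ^ 2)⁻¹ * (-1 : k) ^ ((j : ℤ) * (ι : ℤ))
                * ξ ^ (2 * (j : ℤ) + 2 + (i : ℤ) * (j : ℤ) + 4 * (i : ℤ))
                * (ξ ^ (j : ℤ) + (-1 : k) ^ (ι : ℤ))) •
              (e₁ k ⊗ₜ[k] e₁ k))) :
    Function.Bijective c ∧
    (LinearMap.rTensor (Fin 2 → k) c ∘ₗ
        ((TensorProduct.assoc k (Fin 2 → k) (Fin 2 → k) (Fin 2 → k)).symm.toLinearMap ∘ₗ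
          LinearMap.lTensor (Fin 2 → k) c ∘ₗ
          (TensorProduct.assoc k (Fin 2 → k) (Fin 2 → k) (Fin 2 → k)).toLinearMap) ∘ₗ
        LinearMap.rTensor (Fin 2 → k) c
      = ((TensorProduct.assoc k (Fin 2 → k) (Fin 2 → k) (Fin 2 → k)).symm.toLinearMap ∘ₗ
          LinearMap.lTensor (Fin 2 → k) c ∘ₗ
          (TensorProduct.assoc k (Fin 2 → k) (Fin 2 → k) (Fin 2 → k)).toLinearMap) ∘ₗ
        LinearMap.rTensor (Fin 2 → k) c ∘ₗ
        ((TensorProduct.assoc k (Fin 2 → k) (Fin 2 → k) (Fin 2 → k)).symm.toLinearMap ∘ₗ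
          LinearMap.lTensor (Fin 2 → k) c ∘ₗ
          (TensorProduct.assoc k (Fin 2 → k) (Fin 2 → k) (Fin 2 → k)).toLinearMap)) := by
  have h1_ne : (-1 : k) ≠ 0 := by norm_num
  have hcoeff (p q : ℤ) : (-1 : k) ^ p * ξ ^ q ≠ 0 :=
    mul_ne_zero (zpow_ne_zero p h1_ne) (zpow_ne_zero q (hξ.ne_zero (by norm_num)))
  set ε : k := (-1) ^ ((ι : ℤ) + 1)
  have hε : ε = 1 ∨ ε = -1 := (Int.even_or_odd _).imp Even.neg_one_zpow Odd.neg_one_zpow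
  have hε_neg : -ε = (-1) ^ (ι : ℤ) := by
    simp only [ε, zpow_add_one₀ h1_ne, mul_neg_one, neg_neg]
  have hb0 : Pi.basisFun k (Fin 2) 0 = e₁ k := by ext x; fin_cases x <;> simp [e₁]
  have hb1 : Pi.basisFun k (Fin 2) 1 = e₂ k := by ext x; fin_cases x <;> simp [e₂]
  rw [← hb0, ← hb1] at h0 h1
  obtain rfl | rfl : kk = 0 ∨ kk = 1 := by have := hΛ.2.2.1; omega
  · obtain ⟨h11, h12, h21, h22⟩ := h0 rfl
    refine bijective_and_satisfiesBraidEquation_of_apply_basis _ hε (hcoeff _ _) (hcoeff _ _)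
      ?_ ?_ h11 h12 h21 h22
    · exact neg_one_zpow_mul_of_even ⟨-((ι : ℤ) + 1), by ring⟩ _
    · rw [neg_mul_eq_neg_mul, hε_neg]
      exact neg_one_zpow_mul_of_even ⟨0, by ring⟩ _
  · obtain ⟨h11, h12, h21, h22⟩ := h1 rfl
    refine bijective_and_satisfiesBraidEquation_of_apply_basis _ hε (hcoeff _ _) (hcoeff _ _)
      ?_ ?_ h11 h12 h21 h22
    · exact neg_one_zpow_mul_of_even ⟨0, by ring⟩ _
    · rw [neg_mul_eq_neg_mul, hε_neg]
      exact neg_one_zpow_mul_of_even ⟨-(ι : ℤ), by ring⟩ _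

theorem stmt_9 (k : Type) [Field k] [IsAlgClosed k] [CharZero k]
    (ξ : k) (hξ : IsPrimitiveRoot ξ 6)
    (i j kk ι : ℕ) (hΛ : inLambda i j kk ι)
    (c : ((Fin 2 → k) ⊗[k] (Fin 2 → k)) →ₗ[k] ((Fin 2 → k) ⊗[k] (Fin 2 → k)))
    -- the values of c in the case k = 0
    (h0 : kk = 0 →
      (c (e₁ k ⊗ₜ[k] e₁ k)
          = ((-1 : k) ^ (((ι : ℤ) + 1) * (j : ℤ)) * ξ ^ ((i : ℤ) * (j : ℤ))) •
              (e₁ k ⊗ₜ[k] e₁ k) ∧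
       c (e₁ k ⊗ₜ[k] e₂ k)
          = ((-1 : k) ^ ((j : ℤ) * (ι : ℤ)) * ξ ^ (((i : ℤ) + 2) * (j : ℤ))) •
              (e₂ k ⊗ₜ[k] e₁ k)
            + ((-1 : k) ^ (((ι : ℤ) + 1) * (j : ℤ)) * ξ ^ ((i : ℤ) * (j : ℤ))
               + (-1 : k) ^ (((j : ℤ) - 1) * (ι : ℤ)) * ξ ^ (((i : ℤ) + 2) * (j : ℤ))) •
              (e₁ k ⊗ₜ[k] e₂ k) ∧
       c (e₂ k ⊗ₜ[k] e₁ k)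
          = ((-1 : k) ^ (((ι : ℤ) + 1) * ((j : ℤ) - 1)) * ξ ^ ((i : ℤ) * (j : ℤ))) •
              (e₁ k ⊗ₜ[k] e₂ k) ∧
       c (e₂ k ⊗ₜ[k] e₂ k)
          = ((-1 : k) ^ (((j : ℤ) - 1) * (ι : ℤ)) * ξ ^ (((i : ℤ) + 2) * (j : ℤ))) •
              (e₂ k ⊗ₜ[k] e₂ k)
            + ((1 - ξ ^ 2)⁻¹ * (-1 : k) ^ ((ι : ℤ) * ((j : ℤ) - 1))
                * ξ ^ (((j : ℤ) - 2) * (i : ℤ) + 2 * (j : ℤ) - 1)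
                * (ξ ^ (j : ℤ) - (-1 : k) ^ (ι : ℤ))) •
              (e₁ k ⊗ₜ[k] e₁ k)))
    -- the values of c in the case k = 1
    (h1 : kk = 1 →
      (c (e₁ k ⊗ₜ[k] e₁ k)
          = ((-1 : k) ^ (((j : ℤ) - 1) * ((ι : ℤ) + 1)) * ξ ^ ((i : ℤ) * (j : ℤ))) •
              (e₁ k ⊗ₜ[k] e₁ k) ∧
       c (e₁ k ⊗ₜ[k] e₂ k)
          = ((-1 : k) ^ (((j : ℤ) - 1) * (ι : ℤ)) * ξ ^ (((i : ℤ) + 2) * (j : ℤ))) •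
              (e₂ k ⊗ₜ[k] e₁ k)
            + ((-1 : k) ^ (((j : ℤ) - 1) * ((ι : ℤ) + 1)) * ξ ^ ((i : ℤ) * (j : ℤ))
               + (-1 : k) ^ ((j : ℤ) * (ι : ℤ)) * ξ ^ (((i : ℤ) + 2) * (j : ℤ))) •
              (e₁ k ⊗ₜ[k] e₂ k) ∧
       c (e₂ k ⊗ₜ[k] e₁ k)
          = ((-1 : k) ^ (((ι : ℤ) + 1) * (j : ℤ)) * ξ ^ ((i : ℤ) * (j : ℤ))) •
              (e₁ k ⊗ₜ[k] e₂ k) ∧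
       c (e₂ k ⊗ₜ[k] e₂ k)
          = ((-1 : k) ^ ((j : ℤ) * (ι : ℤ)) * ξ ^ (((i : ℤ) + 2) * (j : ℤ))) •
              (e₂ k ⊗ₜ[k] e₂ k)
            + ((1 - ξ ^ 2)⁻¹ * (-1 : k) ^ ((j : ℤ) * (ι : ℤ))
                * ξ ^ (2 * (j : ℤ) + 2 + (i : ℤ) * (j : ℤ) + 4 * (i : ℤ))
                * (ξ ^ (j : ℤ) + (-1 : k) ^ (ι : ℤ))) •
              (e₁ k ⊗ₜ[k] e₁ k))) :
    Function.Bijective c ∧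
    (LinearMap.rTensor (Fin 2 → k) c ∘ₗ
        ((TensorProduct.assoc k (Fin 2 → k) (Fin 2 → k) (Fin 2 → k)).symm.toLinearMap ∘ₗ
          LinearMap.lTensor (Fin 2 → k) c ∘ₗ
          (TensorProduct.assoc k (Fin 2 → k) (Fin 2 → k) (Fin 2 → k)).toLinearMap) ∘ₗ
        LinearMap.rTensor (Fin 2 → k) c
      = ((TensorProduct.assoc k (Fin 2 → k) (Fin 2 → k) (Fin 2 → k)).symm.toLinearMap ∘ₗ
          LinearMap.lTensor (Fin 2 → k) c ∘ₗ
          (TensorProduct.assoc k (Fin 2 → k) (Fin 2 → k) (Fin 2 → k)).toLinearMap) ∘ₗ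
        LinearMap.rTensor (Fin 2 → k) c ∘ₗ
        ((TensorProduct.assoc k (Fin 2 → k) (Fin 2 → k) (Fin 2 → k)).symm.toLinearMap ∘ₗ
          LinearMap.lTensor (Fin 2 → k) c ∘ₗ
          (TensorProduct.assoc k (Fin 2 → k) (Fin 2 → k) (Fin 2 → k)).toLinearMap)) :=
  stmt_9_general k ξ hξ i j kk ι hΛ c h0 h1
end

section
/- There is an isomorphism of Hopf algebras K ≅ C ⊗ k[Z/2], where C ⊗ k[Z/2] carries the tensor product Hopf algebra structure and k[Z/2] is the group algebra of the cyclic group of order 2; explicitly, C is (isomorphic to) the Hopf subalgebra of K generated by a and b, and c generates a central group-like of order 2. -/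
/- STATEMENT 15: K ≅ C ⊗ k[Z/2] as Hopf algebras: there is an algebra isomorphism
e : K → C ⊗ k[Z/2] with e(a) = a ⊗ 1, e(b) = b ⊗ 1, e(c) = 1 ⊗ g (so that C is the Hopf
subalgebra of K generated by a and b, and c corresponds to the central group-like generator
of k[Z/2] of order 2), and e intertwines the comultiplications and counits, where C ⊗ k[Z/2]
carries the tensor product Hopf algebra structure.  The comultiplications/counits of K, C and
k[Z/2] are quantified over all algebra maps taking the prescribed values on generators. -/

open scoped TensorProduct

namespace Paper24

variable (k : Type) [Field k] (ξ : k)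

/-- The generator `a` of the free algebra on three generators. -/
noncomputable def ka₀ : FreeAlgebra k (Fin 3) := FreeAlgebra.ι k 0
/-- The generator `b`. -/
noncomputable def kb₀ : FreeAlgebra k (Fin 3) := FreeAlgebra.ι k 1
/-- The generator `c`. -/
noncomputable def kc₀ : FreeAlgebra k (Fin 3) := FreeAlgebra.ι k 2

/-- The defining relations of the 24-dimensional Hopf algebra `K`. -/
inductive KRel : FreeAlgebra k (Fin 3) → FreeAlgebra k (Fin 3) → Prop
  | a6 : KRel (ka₀ k ^ 6) 1
  | b2 : KRel (kb₀ k ^ 2) 0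
  | c2 : KRel (kc₀ k ^ 2) 1
  | ba : KRel (kb₀ k * ka₀ k) (ξ • (ka₀ k * kb₀ k))
  | ac : KRel (ka₀ k * kc₀ k) (kc₀ k * ka₀ k)
  | bc : KRel (kb₀ k * kc₀ k) (kc₀ k * kb₀ k)

/-- The algebra `K`. -/
noncomputable abbrev KAlg := RingQuot (KRel k ξ)

/-- The image of `a` in `K`. -/
noncomputable def Ka : KAlg k ξ := RingQuot.mkAlgHom k (KRel k ξ) (ka₀ k)
/-- The image of `b` in `K`. -/
noncomputable def Kb : KAlg k ξ := RingQuot.mkAlgHom k (KRel k ξ) (kb₀ k)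
/-- The image of `c` in `K`. -/
noncomputable def Kc : KAlg k ξ := RingQuot.mkAlgHom k (KRel k ξ) (kc₀ k)

end Paper24


namespace Paper24

variable (k : Type) [Field k] (ξ : k)

/-- The generator `a` of the free algebra on two generators. -/
noncomputable def sa₀ : FreeAlgebra k (Fin 2) := FreeAlgebra.ι k 0
/-- The generator `b`. -/
noncomputable def sb₀ : FreeAlgebra k (Fin 2) := FreeAlgebra.ι k 1

/-- The defining relations of the 12-dimensional Hopf algebra `C`. -/
inductive CCRel : FreeAlgebra k (Fin 2) → FreeAlgebra k (Fin 2) → Prop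
  | a6 : CCRel (sa₀ k ^ 6) 1
  | b2 : CCRel (sb₀ k ^ 2) 0
  | ba : CCRel (sb₀ k * sa₀ k) (ξ • (sa₀ k * sb₀ k))

/-- The 12-dimensional Hopf algebra `C`. -/
noncomputable abbrev CCAlg := RingQuot (CCRel k ξ)

/-- The image of `a` in `C`. -/
noncomputable def CCa : CCAlg k ξ := RingQuot.mkAlgHom k (CCRel k ξ) (sa₀ k)
/-- The image of `b` in `C`. -/
noncomputable def CCb : CCAlg k ξ := RingQuot.mkAlgHom k (CCRel k ξ) (sb₀ k)

end Paper24


/-! `K` is presented by the relations of `C` in `a, b`, together with a generator `c` of order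
two commuting with `a` and `b`; these are exactly the relations of `C ⊗ k[ℤ/2]` in
`a ⊗ 1, b ⊗ 1, 1 ⊗ g`. The universal properties of the three presentations therefore give
mutually inverse algebra maps, and since both sides of the compatibility with `Δ` and `ε` are
algebra maps out of `K`, it suffices to compare them on `a, b, c`. -/

section ZModPow

variable {M : Type*} [Monoid M] {n : ℕ} [NeZero n]

def zmodPowHom (u : M) (hu : u ^ n = 1) : Multiplicative (ZMod n) →* M where
  toFun z := u ^ z.toAdd.val
  map_one' := by simp
  map_mul' x y := by rw [toAdd_mul, ZMod.val_add, ← pow_eq_pow_mod _ hu, pow_add]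

@[simp]
theorem zmodPowHom_apply (u : M) (hu : u ^ n = 1) (z : Multiplicative (ZMod n)) :
    zmodPowHom u hu z = u ^ z.toAdd.val :=
  rfl

end ZModPow

namespace Paper24

section Presentations

variable {k : Type} [Field k] {ξ : k}

theorem Ka_pow_six : Ka k ξ ^ 6 = 1 := by
  simpa [Ka, map_pow] using RingQuot.mkAlgHom_rel k (@KRel.a6 k _ ξ)

theorem Kb_sq : Kb k ξ ^ 2 = 0 := by
  simpa [Kb, map_pow] using RingQuot.mkAlgHom_rel k (@KRel.b2 k _ ξ)

theorem Kc_sq : Kc k ξ ^ 2 = 1 := by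
  simpa [Kc, map_pow] using RingQuot.mkAlgHom_rel k (@KRel.c2 k _ ξ)

theorem Kb_mul_Ka : Kb k ξ * Ka k ξ = ξ • (Ka k ξ * Kb k ξ) := by
  simpa [Ka, Kb, map_mul, map_smul] using RingQuot.mkAlgHom_rel k (@KRel.ba k _ ξ)

theorem commute_Ka_Kc : Commute (Ka k ξ) (Kc k ξ) := by
  simpa [commute_iff_eq, Ka, Kc, map_mul] using RingQuot.mkAlgHom_rel k (@KRel.ac k _ ξ)

theorem commute_Kb_Kc : Commute (Kb k ξ) (Kc k ξ) := by
  simpa [commute_iff_eq, Kb, Kc, map_mul] using RingQuot.mkAlgHom_rel k (@KRel.bc k _ ξ)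

theorem CCa_pow_six : CCa k ξ ^ 6 = 1 := by
  simpa [CCa, map_pow] using RingQuot.mkAlgHom_rel k (@CCRel.a6 k _ ξ)

theorem CCb_sq : CCb k ξ ^ 2 = 0 := by
  simpa [CCb, map_pow] using RingQuot.mkAlgHom_rel k (@CCRel.b2 k _ ξ)

theorem CCb_mul_CCa : CCb k ξ * CCa k ξ = ξ • (CCa k ξ * CCb k ξ) := by
  simpa [CCa, CCb, map_mul, map_smul] using RingQuot.mkAlgHom_rel k (@CCRel.ba k _ ξ)

variable {A : Type*} [Semiring A] [Algebra k A]

theorem KAlg.algHom_ext {f g : KAlg k ξ →ₐ[k] A} (ha : f (Ka k ξ) = g (Ka k ξ))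
    (hb : f (Kb k ξ) = g (Kb k ξ)) (hc : f (Kc k ξ) = g (Kc k ξ)) : f = g := by
  refine RingQuot.ringQuot_ext' _ _ _ (FreeAlgebra.hom_ext (funext fun i => ?_))
  fin_cases i
  exacts [ha, hb, hc]

theorem CCAlg.algHom_ext {f g : CCAlg k ξ →ₐ[k] A} (ha : f (CCa k ξ) = g (CCa k ξ))
    (hb : f (CCb k ξ) = g (CCb k ξ)) : f = g := by
  refine RingQuot.ringQuot_ext' _ _ _ (FreeAlgebra.hom_ext (funext fun i => ?_))
  fin_cases i
  exacts [ha, hb]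

variable (k ξ) {x y z : A}

noncomputable def KAlg.lift (hx : x ^ 6 = 1) (hy : y ^ 2 = 0) (hz : z ^ 2 = 1)
    (hyx : y * x = ξ • (x * y)) (hxz : Commute x z) (hyz : Commute y z) :
    KAlg k ξ →ₐ[k] A :=
  RingQuot.liftAlgHom k ⟨FreeAlgebra.lift k ![x, y, z], fun _ _ h => by
    cases h <;> simp [ka₀, kb₀, kc₀, hx, hy, hz, hyx, hxz.eq, hyz.eq]⟩

noncomputable def CCAlg.lift (hx : x ^ 6 = 1) (hy : y ^ 2 = 0) (hyx : y * x = ξ • (x * y)) :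
    CCAlg k ξ →ₐ[k] A :=
  RingQuot.liftAlgHom k ⟨FreeAlgebra.lift k ![x, y], fun _ _ h => by
    cases h <;> simp [sa₀, sb₀, hx, hy, hyx]⟩

variable {k ξ}

section
variable (hx : x ^ 6 = 1) (hy : y ^ 2 = 0) (hz : z ^ 2 = 1) (hyx : y * x = ξ • (x * y))
  (hxz : Commute x z) (hyz : Commute y z)

@[simp] theorem KAlg.lift_Ka : KAlg.lift k ξ hx hy hz hyx hxz hyz (Ka k ξ) = x := by
  simp [KAlg.lift, Ka, ka₀, RingQuot.liftAlgHom_mkAlgHom_apply]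

@[simp] theorem KAlg.lift_Kb : KAlg.lift k ξ hx hy hz hyx hxz hyz (Kb k ξ) = y := by
  simp [KAlg.lift, Kb, kb₀, RingQuot.liftAlgHom_mkAlgHom_apply]

@[simp] theorem KAlg.lift_Kc : KAlg.lift k ξ hx hy hz hyx hxz hyz (Kc k ξ) = z := by
  simp [KAlg.lift, Kc, kc₀, RingQuot.liftAlgHom_mkAlgHom_apply]

@[simp] theorem CCAlg.lift_CCa : CCAlg.lift k ξ hx hy hyx (CCa k ξ) = x := by
  simp [CCAlg.lift, CCa, sa₀, RingQuot.liftAlgHom_mkAlgHom_apply]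

@[simp] theorem CCAlg.lift_CCb : CCAlg.lift k ξ hx hy hyx (CCb k ξ) = y := by
  simp [CCAlg.lift, CCb, sb₀, RingQuot.liftAlgHom_mkAlgHom_apply]

end

end Presentations

variable (k : Type) [Field k] (ξ : k)

theorem commute_Kc (x : KAlg k ξ) : Commute x (Kc k ξ) := by
  obtain ⟨x, rfl⟩ := RingQuot.mkAlgHom_surjective k (KRel k ξ) x
  induction x using FreeAlgebra.induction with
  | grade0 r => rw [AlgHom.commutes]; exact Algebra.commute_algebraMap_left r _
  | grade1 i =>
    fin_cases i
    exacts [commute_Ka_Kc, commute_Kb_Kc, Commute.refl _]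
  | mul x y hx hy => rw [map_mul]; exact hx.mul_left hy
  | add x y hx hy => rw [map_add]; exact hx.add_left hy

noncomputable def groupAlgebraToKAlg :
    MonoidAlgebra k (Multiplicative (ZMod 2)) →ₐ[k] KAlg k ξ :=
  MonoidAlgebra.lift k (KAlg k ξ) _ (zmodPowHom (Kc k ξ) Kc_sq)

theorem commute_groupAlgebraToKAlg (x : KAlg k ξ)
    (y : MonoidAlgebra k (Multiplicative (ZMod 2))) : Commute x (groupAlgebraToKAlg k ξ y) := by
  induction y using MonoidAlgebra.induction_on with
  | of z => simpa [groupAlgebraToKAlg] using (commute_Kc k ξ x).pow_right _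
  | add f g hf hg => rw [map_add]; exact hf.add_right hg
  | smul r f hf => rw [map_smul]; exact hf.smul_right r

noncomputable def ofTensor :
    CCAlg k ξ ⊗[k] MonoidAlgebra k (Multiplicative (ZMod 2)) →ₐ[k] KAlg k ξ :=
  Algebra.TensorProduct.lift (CCAlg.lift k ξ Ka_pow_six Kb_sq Kb_mul_Ka)
    (groupAlgebraToKAlg k ξ) fun _ => commute_groupAlgebraToKAlg k ξ _

noncomputable def toTensor :
    KAlg k ξ →ₐ[k] CCAlg k ξ ⊗[k] MonoidAlgebra k (Multiplicative (ZMod 2)) :=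
  KAlg.lift k ξ (x := CCa k ξ ⊗ₜ 1) (y := CCb k ξ ⊗ₜ 1)
    (z := 1 ⊗ₜ MonoidAlgebra.of k _ (Multiplicative.ofAdd 1))
    (by simp [Algebra.TensorProduct.tmul_pow, CCa_pow_six, Algebra.TensorProduct.one_def])
    (by simp [Algebra.TensorProduct.tmul_pow, CCb_sq])
    (by rw [Algebra.TensorProduct.tmul_pow, one_pow, ← map_pow]; rfl)
    (by simp [CCb_mul_CCa, TensorProduct.smul_tmul'])
    (by simp [commute_iff_eq])
    (by simp [commute_iff_eq])

@[simp] theorem toTensor_Ka : toTensor k ξ (Ka k ξ) = CCa k ξ ⊗ₜ 1 := by simp [toTensor]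

@[simp] theorem toTensor_Kb : toTensor k ξ (Kb k ξ) = CCb k ξ ⊗ₜ 1 := by simp [toTensor]

@[simp] theorem toTensor_Kc :
    toTensor k ξ (Kc k ξ) = 1 ⊗ₜ MonoidAlgebra.of k _ (Multiplicative.ofAdd 1) := by
  simp [toTensor]

theorem ofTensor_comp_toTensor : (ofTensor k ξ).comp (toTensor k ξ) = AlgHom.id k _ := by
  apply KAlg.algHom_ext <;>
    simp [ofTensor, groupAlgebraToKAlg, show (1 : ZMod 2).val = 1 from rfl]

theorem toTensor_comp_ofTensor : (toTensor k ξ).comp (ofTensor k ξ) = AlgHom.id k _ := by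
  refine Algebra.TensorProduct.ext (CCAlg.algHom_ext ?_ ?_)
    (MonoidAlgebra.algHom_ext (fun z => ?_) (Subsingleton.elim _ _))
  · simp [ofTensor]
  · simp [ofTensor]
  · obtain rfl | rfl : z = 1 ∨ z = Multiplicative.ofAdd 1 := by revert z; decide
    · simp [ofTensor, groupAlgebraToKAlg, Algebra.TensorProduct.one_def, MonoidAlgebra.one_def]
    · simp [ofTensor, groupAlgebraToKAlg, show (1 : ZMod 2).val = 1 from rfl]

noncomputable def equivTensor :
    KAlg k ξ ≃ₐ[k] CCAlg k ξ ⊗[k] MonoidAlgebra k (Multiplicative (ZMod 2)) :=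
  AlgEquiv.ofAlgHom (toTensor k ξ) (ofTensor k ξ) (toTensor_comp_ofTensor k ξ)
    (ofTensor_comp_toTensor k ξ)

end Paper24

open Paper24

theorem stmt_15_general (k : Type) [Field k]
    (ξ : k)
    -- the comultiplication and counit of K
    (ΔK : (KAlg k ξ) →ₐ[k] ((KAlg k ξ) ⊗[k] (KAlg k ξ)))
    (hΔKa : ΔK (Ka k ξ) = (Ka k ξ) ⊗ₜ[k] (Ka k ξ)
        + (ξ ^ 4 + ξ ^ 5) • ((Kb k ξ) ⊗ₜ[k] ((Kb k ξ) * (Ka k ξ) ^ 3)))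
    (hΔKb : ΔK (Kb k ξ) = (Kb k ξ) ⊗ₜ[k] ((Ka k ξ) ^ 4) + (Ka k ξ) ⊗ₜ[k] (Kb k ξ))
    (hΔKc : ΔK (Kc k ξ) = (Kc k ξ) ⊗ₜ[k] (Kc k ξ))
    (εK : (KAlg k ξ) →ₐ[k] k) (hεKa : εK (Ka k ξ) = 1) (hεKb : εK (Kb k ξ) = 0) (hεKc : εK (Kc k ξ) = 1)
    -- the comultiplication and counit of C
    (ΔC : (CCAlg k ξ) →ₐ[k] ((CCAlg k ξ) ⊗[k] (CCAlg k ξ)))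
    (hΔCa : ΔC (CCa k ξ) = (CCa k ξ) ⊗ₜ[k] (CCa k ξ)
        + (ξ ^ 4 + ξ ^ 5) • ((CCb k ξ) ⊗ₜ[k] ((CCb k ξ) * (CCa k ξ) ^ 3)))
    (hΔCb : ΔC (CCb k ξ) = (CCb k ξ) ⊗ₜ[k] ((CCa k ξ) ^ 4) + (CCa k ξ) ⊗ₜ[k] (CCb k ξ))
    (εC : (CCAlg k ξ) →ₐ[k] k) (hεCa : εC (CCa k ξ) = 1) (hεCb : εC (CCb k ξ) = 0)
    -- the comultiplication and counit of the group algebra k[Z/2]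
    (ΔG : (MonoidAlgebra k (Multiplicative (ZMod 2))) →ₐ[k] ((MonoidAlgebra k (Multiplicative (ZMod 2))) ⊗[k] (MonoidAlgebra k (Multiplicative (ZMod 2)))))
    (hΔG : ∀ z : Multiplicative (ZMod 2),
      ΔG (MonoidAlgebra.of k (Multiplicative (ZMod 2)) z)
        = MonoidAlgebra.of k (Multiplicative (ZMod 2)) z
            ⊗ₜ[k] MonoidAlgebra.of k (Multiplicative (ZMod 2)) z)
    (εG : (MonoidAlgebra k (Multiplicative (ZMod 2))) →ₐ[k] k)
    (hεG : ∀ z : Multiplicative (ZMod 2),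
      εG (MonoidAlgebra.of k (Multiplicative (ZMod 2)) z) = 1) :
    ∃ e : (KAlg k ξ) ≃ₐ[k] ((CCAlg k ξ) ⊗[k] (MonoidAlgebra k (Multiplicative (ZMod 2)))),
      -- values on the generators
      e (Ka k ξ) = (CCa k ξ) ⊗ₜ[k] (1 : MonoidAlgebra k (Multiplicative (ZMod 2))) ∧
      e (Kb k ξ) = (CCb k ξ) ⊗ₜ[k] (1 : MonoidAlgebra k (Multiplicative (ZMod 2))) ∧
      e (Kc k ξ) = (1 : CCAlg k ξ) ⊗ₜ[k]
          (MonoidAlgebra.of k (Multiplicative (ZMod 2)) (Multiplicative.ofAdd (1 : ZMod 2))) ∧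
      -- e intertwines the comultiplications (tensor product coalgebra structure on C ⊗ k[Z/2])
      (Algebra.TensorProduct.map e.toAlgHom e.toAlgHom).comp ΔK
        = ((Algebra.TensorProduct.tensorTensorTensorComm k k k k (CCAlg k ξ) (CCAlg k ξ) (MonoidAlgebra k (Multiplicative (ZMod 2))) (MonoidAlgebra k (Multiplicative (ZMod 2)))).toAlgHom.comp
            (Algebra.TensorProduct.map ΔC ΔG)).comp e.toAlgHom ∧
      -- e intertwines the counits
      εK = ((Algebra.TensorProduct.lmul' k).comp (Algebra.TensorProduct.map εC εG)).comp e.toAlgHom := by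
  simp only [MonoidAlgebra.of_apply] at hΔG hεG
  refine ⟨equivTensor k ξ, toTensor_Ka k ξ, toTensor_Kb k ξ, toTensor_Kc k ξ,
    KAlg.algHom_ext ?_ ?_ ?_, KAlg.algHom_ext ?_ ?_ ?_⟩ <;>
    simp [equivTensor, hΔKa, hΔKb, hΔKc, hΔCa, hΔCb, hΔG, hεKa, hεKb, hεKc, hεCa, hεCb, hεG,
      Algebra.TensorProduct.tmul_mul_tmul, Algebra.TensorProduct.tmul_pow,
      TensorProduct.smul_tmul', TensorProduct.add_tmul,
      Algebra.TensorProduct.tensorTensorTensorComm_tmul, Algebra.TensorProduct.one_def]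

theorem stmt_15 (k : Type) [Field k] [IsAlgClosed k] [CharZero k]
    (ξ : k) (hξ : IsPrimitiveRoot ξ 6)
    -- the comultiplication and counit of K
    (ΔK : (KAlg k ξ) →ₐ[k] ((KAlg k ξ) ⊗[k] (KAlg k ξ)))
    (hΔKa : ΔK (Ka k ξ) = (Ka k ξ) ⊗ₜ[k] (Ka k ξ)
        + (ξ ^ 4 + ξ ^ 5) • ((Kb k ξ) ⊗ₜ[k] ((Kb k ξ) * (Ka k ξ) ^ 3)))
    (hΔKb : ΔK (Kb k ξ) = (Kb k ξ) ⊗ₜ[k] ((Ka k ξ) ^ 4) + (Ka k ξ) ⊗ₜ[k] (Kb k ξ))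
    (hΔKc : ΔK (Kc k ξ) = (Kc k ξ) ⊗ₜ[k] (Kc k ξ))
    (εK : (KAlg k ξ) →ₐ[k] k) (hεKa : εK (Ka k ξ) = 1) (hεKb : εK (Kb k ξ) = 0) (hεKc : εK (Kc k ξ) = 1)
    -- the comultiplication and counit of C
    (ΔC : (CCAlg k ξ) →ₐ[k] ((CCAlg k ξ) ⊗[k] (CCAlg k ξ)))
    (hΔCa : ΔC (CCa k ξ) = (CCa k ξ) ⊗ₜ[k] (CCa k ξ)
        + (ξ ^ 4 + ξ ^ 5) • ((CCb k ξ) ⊗ₜ[k] ((CCb k ξ) * (CCa k ξ) ^ 3)))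
    (hΔCb : ΔC (CCb k ξ) = (CCb k ξ) ⊗ₜ[k] ((CCa k ξ) ^ 4) + (CCa k ξ) ⊗ₜ[k] (CCb k ξ))
    (εC : (CCAlg k ξ) →ₐ[k] k) (hεCa : εC (CCa k ξ) = 1) (hεCb : εC (CCb k ξ) = 0)
    -- the comultiplication and counit of the group algebra k[Z/2]
    (ΔG : (MonoidAlgebra k (Multiplicative (ZMod 2))) →ₐ[k] ((MonoidAlgebra k (Multiplicative (ZMod 2))) ⊗[k] (MonoidAlgebra k (Multiplicative (ZMod 2)))))
    (hΔG : ∀ z : Multiplicative (ZMod 2),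
      ΔG (MonoidAlgebra.of k (Multiplicative (ZMod 2)) z)
        = MonoidAlgebra.of k (Multiplicative (ZMod 2)) z
            ⊗ₜ[k] MonoidAlgebra.of k (Multiplicative (ZMod 2)) z)
    (εG : (MonoidAlgebra k (Multiplicative (ZMod 2))) →ₐ[k] k)
    (hεG : ∀ z : Multiplicative (ZMod 2),
      εG (MonoidAlgebra.of k (Multiplicative (ZMod 2)) z) = 1) :
    ∃ e : (KAlg k ξ) ≃ₐ[k] ((CCAlg k ξ) ⊗[k] (MonoidAlgebra k (Multiplicative (ZMod 2)))),
      -- values on the generators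
      e (Ka k ξ) = (CCa k ξ) ⊗ₜ[k] (1 : MonoidAlgebra k (Multiplicative (ZMod 2))) ∧
      e (Kb k ξ) = (CCb k ξ) ⊗ₜ[k] (1 : MonoidAlgebra k (Multiplicative (ZMod 2))) ∧
      e (Kc k ξ) = (1 : CCAlg k ξ) ⊗ₜ[k]
          (MonoidAlgebra.of k (Multiplicative (ZMod 2)) (Multiplicative.ofAdd (1 : ZMod 2))) ∧
      -- e intertwines the comultiplications (tensor product coalgebra structure on C ⊗ k[Z/2])
      (Algebra.TensorProduct.map e.toAlgHom e.toAlgHom).comp ΔK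
        = ((Algebra.TensorProduct.tensorTensorTensorComm k k k k (CCAlg k ξ) (CCAlg k ξ) (MonoidAlgebra k (Multiplicative (ZMod 2))) (MonoidAlgebra k (Multiplicative (ZMod 2)))).toAlgHom.comp
            (Algebra.TensorProduct.map ΔC ΔG)).comp e.toAlgHom ∧
      -- e intertwines the counits
      εK = ((Algebra.TensorProduct.lmul' k).comp (Algebra.TensorProduct.map εC εG)).comp e.toAlgHom :=
  stmt_15_general k ξ ΔK hΔKa hΔKb hΔKc εK hεKa hεKb hεKc ΔC hΔCa hΔCb εC hεCa hεCb ΔG hΔG εG hεG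
end
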